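/- Let T_1, ..., T_n be commuting contractions on a complex Hilbert space H, let T = T_1 T_2 ⋯ T_n, and let H_1 = {h ∈ H : ‖T^m h‖ = ‖h‖ = ‖(T*)^m h‖ for all m ≥ 1}. Then H_1 reduces each T_i and each T_i|_{H_1} is a unitary on H_1. -/

import Mathlib

open ContinuousLinearMap Filter
open scoped InnerProductSpace

noncomputable section

variable {H : Type*} [NormedAddCommGroup H] [InnerProductSpace ℂ H] [CompleteSpace H]

/-- K is a reducing subspace for T. -/
def Reduces (T : H →L[ℂ] H) (K : Submodule ℂ H) : Prop :=
  (∀ h ∈ K, T h ∈ K) ∧ (∀ h ∈ K, adjoint T h ∈ K)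

/-- The restriction of T to K is a unitary of K (a surjective isometry of K). -/
def UnitaryOn (T : H →L[ℂ] H) (K : Submodule ℂ H) : Prop :=
  (∀ h ∈ K, ‖T h‖ = ‖h‖) ∧ (∀ h ∈ K, ∃ g ∈ K, T g = h)

/-- The restriction of T to K is a pure isometry (unilateral shift). -/
def PureIsometryOn (T : H →L[ℂ] H) (K : Submodule ℂ H) : Prop :=
  (∀ h ∈ K, ‖T h‖ = ‖h‖) ∧
    ∀ h ∈ K, Tendsto (fun n : ℕ => ((adjoint T) ^ n) h) atTop (nhds 0)

/-- The restriction of T to K is completely non-unitary. -/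
def CnuOn (T : H →L[ℂ] H) (K : Submodule ℂ H) : Prop :=
  ∀ L : Submodule ℂ H, L ≤ K → IsClosed (L : Set H) →
    Reduces T L → UnitaryOn T L → L = ⊥

lemma jup_apply_le (A : H →L[ℂ] H) (hA : ‖A‖ ≤ 1) (x : H) : ‖A x‖ ≤ ‖x‖ :=
  le_trans (A.le_opNorm x) (by nlinarith [norm_nonneg x])

lemma jup_adjoint_mul (A B : H →L[ℂ] H) : adjoint (A * B) = adjoint B * adjoint A :=
  adjoint_comp A B

lemma jup_adjoint_pow (A : H →L[ℂ] H) (m : ℕ) : adjoint (A ^ m) = (adjoint A) ^ m := by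
  induction m with
  | zero => simp [ContinuousLinearMap.one_def, ContinuousLinearMap.adjoint_id]
  | succ k ih => rw [pow_succ, jup_adjoint_mul, ih, pow_succ']

lemma jup_norm_pow_le (A : H →L[ℂ] H) (hA : ‖A‖ ≤ 1) (m : ℕ) : ‖A ^ m‖ ≤ 1 := by
  induction m with
  | zero => simpa [ContinuousLinearMap.one_def] using ContinuousLinearMap.norm_id_le
  | succ k ih =>
    rw [pow_succ]
    exact le_trans (norm_mul_le _ _) (by nlinarith [norm_nonneg (A ^ k), norm_nonneg A])

lemma jup_norm_adjoint (A : H →L[ℂ] H) : ‖adjoint A‖ = ‖A‖ :=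
  LinearIsometryEquiv.norm_map ContinuousLinearMap.adjoint A

lemma jup_contr_fix (A : H →L[ℂ] H) (hA : ‖A‖ ≤ 1) (h : H) (hiso : ‖A h‖ = ‖h‖) :
    adjoint A (A h) = h := by
  have hA' : ‖adjoint A‖ ≤ 1 := by rw [jup_norm_adjoint]; exact hA
  have h1 : ‖adjoint A (A h)‖ ≤ ‖h‖ := le_trans (jup_apply_le _ hA' _) (le_of_eq hiso)
  have h2 : RCLike.re (⟪adjoint A (A h), h⟫_ℂ) = ‖h‖ ^ 2 := by
    rw [adjoint_inner_left, ← hiso]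
    exact inner_self_eq_norm_sq _
  have h3 : ‖adjoint A (A h) - h‖ ^ 2 ≤ 0 := by
    rw [@norm_sub_sq ℂ]
    nlinarith [h1, h2, norm_nonneg (adjoint A (A h)), norm_nonneg h]
  have h4 : ‖adjoint A (A h) - h‖ = 0 := by nlinarith [norm_nonneg (adjoint A (A h) - h)]
  exact sub_eq_zero.mp (norm_eq_zero.mp h4)

/-- The defining membership predicate of the joint unitary subspace. -/
def jupMem (P : H →L[ℂ] H) (h : H) : Prop :=
  ∀ m : ℕ, 1 ≤ m → ‖(P ^ m) h‖ = ‖h‖ ∧ ‖((adjoint P) ^ m) h‖ = ‖h‖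

lemma jupMem_symm {P : H →L[ℂ] H} {h : H} (hm : jupMem P h) : jupMem (adjoint P) h := by
  intro m h1
  rw [adjoint_adjoint]
  exact ⟨(hm m h1).2, (hm m h1).1⟩

lemma jupMem_symm' {P : H →L[ℂ] H} {h : H} (hm : jupMem (adjoint P) h) : jupMem P h := by
  have := jupMem_symm hm
  rwa [adjoint_adjoint] at this

lemma jupMem_normP {P : H →L[ℂ] H} {h : H} (hm : jupMem P h) (m : ℕ) :
    ‖(P ^ m) h‖ = ‖h‖ := by
  cases m with
  | zero => simp
  | succ k => exact (hm (k + 1) (Nat.succ_le_succ (Nat.zero_le k))).1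

lemma jupMem_normQ {P : H →L[ℂ] H} {h : H} (hm : jupMem P h) (m : ℕ) :
    ‖((adjoint P) ^ m) h‖ = ‖h‖ := jupMem_normP (jupMem_symm hm) m

/-- L1 : Q^m P^m h = h on the subspace. -/
lemma jup_QP {P : H →L[ℂ] H} (hP : ‖P‖ ≤ 1) {h : H} (hm : jupMem P h) (m : ℕ) :
    ((adjoint P) ^ m) ((P ^ m) h) = h := by
  have := jup_contr_fix (P ^ m) (jup_norm_pow_le P hP m) h (jupMem_normP hm m)
  rwa [jup_adjoint_pow] at this

lemma jup_PQ {P : H →L[ℂ] H} (hP : ‖P‖ ≤ 1) {h : H} (hm : jupMem P h) (m : ℕ) :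
    (P ^ m) (((adjoint P) ^ m) h) = h := by
  have hP' : ‖adjoint P‖ ≤ 1 := by rw [jup_norm_adjoint]; exact hP
  have := jup_QP hP' (jupMem_symm hm) m
  rwa [adjoint_adjoint] at this

lemma jupMem_P {P : H →L[ℂ] H} (hP : ‖P‖ ≤ 1) {h : H} (hm : jupMem P h) :
    jupMem P (P h) := by
  intro m h1
  have e1 : (P ^ m) (P h) = (P ^ (m + 1)) h := by
    rw [pow_succ, ContinuousLinearMap.mul_apply]
  have e2 : ‖P h‖ = ‖h‖ := by simpa using (hm 1 le_rfl).1
  constructor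
  · rw [e1, jupMem_normP hm (m + 1), ← e2]
  · obtain ⟨k, rfl⟩ : ∃ k, m = k + 1 := ⟨m - 1, (Nat.succ_pred_eq_of_pos h1).symm⟩
    have e3 : ((adjoint P) ^ (k + 1)) (P h) = ((adjoint P) ^ k) h := by
      rw [pow_succ, ContinuousLinearMap.mul_apply]
      congr 1
      simpa using jup_QP hP hm 1
    rw [e3, jupMem_normQ hm k, ← e2]

lemma jupMem_Q {P : H →L[ℂ] H} (hP : ‖P‖ ≤ 1) {h : H} (hm : jupMem P h) :
    jupMem P (adjoint P h) := by
  have hP' : ‖adjoint P‖ ≤ 1 := by rw [jup_norm_adjoint]; exact hP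
  exact jupMem_symm' (jupMem_P hP' (jupMem_symm hm))

lemma jupMem_Qpow {P : H →L[ℂ] H} (hP : ‖P‖ ≤ 1) {h : H} (hm : jupMem P h) (m : ℕ) :
    jupMem P (((adjoint P) ^ m) h) := by
  induction m with
  | zero => simpa using hm
  | succ k ih =>
    have : ((adjoint P) ^ (k + 1)) h = adjoint P (((adjoint P) ^ k) h) := by
      rw [pow_succ', ContinuousLinearMap.mul_apply]
    rw [this]
    exact jupMem_Q hP ih

section half
variable {P S A : H →L[ℂ] H}

lemma jup_half_norms (hP : ‖P‖ ≤ 1) (hS : ‖S‖ ≤ 1) (hA : ‖A‖ ≤ 1)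
    (hf1 : P = S * A) (hf2 : P = A * S) {h : H} (hm : jupMem P h) (m : ℕ) :
    ‖(P ^ m) (A h)‖ = ‖h‖ := by
  have hAS : Commute A S := by rw [Commute, SemiconjBy, ← hf2, ← hf1]
  have hSP : Commute S P := by rw [hf2]; exact (hAS.symm).mul_right (Commute.refl S)
  have key : (P ^ (m + 1)) h = S ((P ^ m) (A h)) := by
    have e : P ^ (m + 1) = S * (P ^ m * A) := by
      calc P ^ (m + 1) = P ^ m * (S * A) := by rw [← hf1, pow_succ]
      _ = S * (P ^ m * A) := by rw [← mul_assoc, (hSP.pow_right m).symm.eq, mul_assoc]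
    rw [e, ContinuousLinearMap.mul_apply, ContinuousLinearMap.mul_apply]
  have n1 : ‖h‖ = ‖S ((P ^ m) (A h))‖ := by rw [← key, jupMem_normP hm (m + 1)]
  have n2 : ‖(P ^ m) (A h)‖ ≤ ‖A h‖ := jup_apply_le _ (jup_norm_pow_le P hP m) _
  have n3 : ‖A h‖ ≤ ‖h‖ := jup_apply_le A hA h
  have n4 : ‖S ((P ^ m) (A h))‖ ≤ ‖(P ^ m) (A h)‖ := jup_apply_le S hS _
  linarith

lemma jup_half_mixed (hP : ‖P‖ ≤ 1) (hS : ‖S‖ ≤ 1) (hA : ‖A‖ ≤ 1)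
    (hf1 : P = S * A) (hf2 : P = A * S) {h : H} (hm : jupMem P h) (m : ℕ) :
    ‖((adjoint P) ^ m) (A h)‖ = ‖h‖ := by
  have hAS : Commute A S := by rw [Commute, SemiconjBy, ← hf2, ← hf1]
  have hAP : Commute A P := by rw [hf1]; exact hAS.mul_right (Commute.refl A)
  set g := ((adjoint P) ^ m) h with hg_def
  have hg : jupMem P g := jupMem_Qpow hP hm m
  have hAg : ‖A g‖ = ‖g‖ := by simpa using jup_half_norms hP hS hA hf1 hf2 hg 0
  have e1 : A h = (P ^ m) (A g) := by
    conv_lhs => rw [← jup_PQ hP hm m]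
    rw [← ContinuousLinearMap.mul_apply, ← ContinuousLinearMap.mul_apply,
      (hAP.pow_right m).eq, ContinuousLinearMap.mul_apply]
    rfl
  have hn : ‖(P ^ m) (A g)‖ = ‖A g‖ := by
    rw [jup_half_norms hP hS hA hf1 hf2 hg m, hAg]
  have e2 : ((adjoint P) ^ m) (A h) = A g := by
    rw [e1]
    have := jup_contr_fix (P ^ m) (jup_norm_pow_le P hP m) (A g) hn
    rwa [jup_adjoint_pow] at this
  rw [e2, hAg, hg_def, jupMem_normQ hm m]

lemma jup_half_mem (hP : ‖P‖ ≤ 1) (hS : ‖S‖ ≤ 1) (hA : ‖A‖ ≤ 1)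
    (hf1 : P = S * A) (hf2 : P = A * S) {h : H} (hm : jupMem P h) :
    jupMem P (A h) := by
  have hAh : ‖A h‖ = ‖h‖ := by simpa using jup_half_norms hP hS hA hf1 hf2 hm 0
  intro m h1
  exact ⟨(jup_half_norms hP hS hA hf1 hf2 hm m).trans hAh.symm,
    (jup_half_mixed hP hS hA hf1 hf2 hm m).trans hAh.symm⟩

end half

lemma jup_prod_norm_le (l : List (H →L[ℂ] H)) (hl : ∀ B ∈ l, ‖B‖ ≤ 1) :
    ‖l.prod‖ ≤ 1 := by
  induction l with
  | nil => simpa [ContinuousLinearMap.one_def] using ContinuousLinearMap.norm_id_le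
  | cons a t ih =>
    rw [List.prod_cons]
    have h1 : ‖a‖ ≤ 1 := hl a List.mem_cons_self
    have h2 : ‖t.prod‖ ≤ 1 := ih fun B hB => hl B (List.mem_cons_of_mem a hB)
    exact le_trans (norm_mul_le _ _) (by nlinarith [norm_nonneg a, norm_nonneg t.prod])

lemma jup_factor (l : List (H →L[ℂ] H)) (hl : ∀ B ∈ l, ‖B‖ ≤ 1)
    (hc : l.Pairwise Commute) (A : H →L[ℂ] H) (hA : A ∈ l) :
    ∃ S : H →L[ℂ] H, ‖S‖ ≤ 1 ∧ l.prod = S * A ∧ l.prod = A * S := by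
  induction l with
  | nil => simp at hA
  | cons a t ih =>
    have hc1 : ∀ y ∈ t, Commute a y := (List.pairwise_cons.mp hc).1
    have hc2 : t.Pairwise Commute := (List.pairwise_cons.mp hc).2
    have hlt : ∀ B ∈ t, ‖B‖ ≤ 1 := fun B hB => hl B (List.mem_cons_of_mem a hB)
    rcases List.mem_cons.mp hA with rfl | hA'
    · refine ⟨t.prod, jup_prod_norm_le t hlt, ?_, by rw [List.prod_cons]⟩
      rw [List.prod_cons]
      exact (Commute.list_prod_right t _ hc1).eq
    · obtain ⟨S', hS'n, h1, h2⟩ := ih hlt hc2 hA'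
      have ha1 : ‖a‖ ≤ 1 := hl a List.mem_cons_self
      refine ⟨a * S', ?_, ?_, ?_⟩
      · exact le_trans (norm_mul_le _ _) (by nlinarith [norm_nonneg a, norm_nonneg S'])
      · rw [List.prod_cons, h1, mul_assoc]
      · rw [List.prod_cons, h2, ← mul_assoc, ← mul_assoc, (hc1 A hA').eq]

theorem joint_unitary_part
    (n : ℕ) (T : Fin n → (H →L[ℂ] H))
    (hnorm : ∀ i, ‖T i‖ ≤ 1)
    (hcomm : ∀ i j, T i * T j = T j * T i)
    (K : Submodule ℂ H)
    (hK : (K : Set H) = {h : H | ∀ m : ℕ, 1 ≤ m →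
      ‖((List.ofFn T).prod ^ m) h‖ = ‖h‖ ∧
      ‖((adjoint (List.ofFn T).prod) ^ m) h‖ = ‖h‖}) :
    ∀ i, Reduces (T i) K ∧ UnitaryOn (T i) K := by
  intro i
  set l := List.ofFn T with hl_def
  set P := l.prod with hP_def
  have hl1 : ∀ B ∈ l, ‖B‖ ≤ 1 := by
    intro B hB
    rw [hl_def, List.mem_ofFn] at hB
    obtain ⟨j, rfl⟩ := hB
    exact hnorm j
  have hlc : l.Pairwise Commute := by
    rw [hl_def, List.pairwise_ofFn]
    intro a b _
    exact hcomm a b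
  have hP : ‖P‖ ≤ 1 := jup_prod_norm_le l hl1
  have hTi : T i ∈ l := by rw [hl_def, List.mem_ofFn]; exact ⟨i, rfl⟩
  obtain ⟨S, hS, hf1, hf2⟩ := jup_factor l hl1 hlc (T i) hTi
  rw [← hP_def] at hf1 hf2
  have hKm : ∀ h : H, h ∈ K ↔ jupMem P h := by
    intro h
    constructor
    · intro hh
      have hh' : h ∈ (K : Set H) := hh
      rw [hK] at hh'
      exact hh'
    · intro hh
      have hh' : h ∈ (K : Set H) := by rw [hK]; exact hh
      exact hh'
  have hP' : ‖adjoint P‖ ≤ 1 := by rw [jup_norm_adjoint]; exact hP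
  have hS' : ‖adjoint S‖ ≤ 1 := by rw [jup_norm_adjoint]; exact hS
  have hA : ‖T i‖ ≤ 1 := hnorm i
  have hA' : ‖adjoint (T i)‖ ≤ 1 := by rw [jup_norm_adjoint]; exact hA
  have hg1 : adjoint P = adjoint S * adjoint (T i) := by rw [hf2, jup_adjoint_mul]
  have hg2 : adjoint P = adjoint (T i) * adjoint S := by rw [hf1, jup_adjoint_mul]
  have memA : ∀ h ∈ K, T i h ∈ K := fun h hh =>
    (hKm _).mpr (jup_half_mem hP hS hA hf1 hf2 ((hKm h).mp hh))
  have memA' : ∀ h ∈ K, adjoint (T i) h ∈ K := fun h hh =>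
    (hKm _).mpr (jupMem_symm' (jup_half_mem hP' hS' hA' hg1 hg2 (jupMem_symm ((hKm h).mp hh))))
  refine ⟨⟨memA, memA'⟩, ?_, ?_⟩
  · intro h hh
    simpa using jup_half_norms hP hS hA hf1 hf2 ((hKm h).mp hh) 0
  · intro h hh
    refine ⟨adjoint (T i) h, memA' h hh, ?_⟩
    have hn : ‖adjoint (T i) h‖ = ‖h‖ := by
      simpa using jup_half_norms hP' hS' hA' hg1 hg2 (jupMem_symm ((hKm h).mp hh)) 0
    have := jup_contr_fix (adjoint (T i)) hA' h hn
    rwa [adjoint_adjoint] at this
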